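/- arXiv:2511.01024 — 14 statements merged into one kernel-verified Lean document; each statement's English description precedes it below -/
import Mathlib

section
/- Let a, b, c, m, n, p, q, α, β be real numbers with a ≠ 0 and α ≠ β. Suppose q = m·p + n, and suppose α and β are abscissas of intersection points of the parabola y = a x² + b x + c with the line y = m x + n, i.e. a·α² + b·α + c = m·α + n and a·β² + b·β + c = m·β + n. Then a·(α − p)·(β − p) = a·p² + b·p + c − q. In particular, the product (α − p)(β − p) depends only on the point (p,q) and the parabola, not on the choice of the line through (p,q). -/
/-!
The abscissas `α ≠ β` of the secant are the two roots of `a x² + (b - m) x + (c - n)`, which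
therefore factors as `a (x - α) (x - β)`; evaluating this at `x = p`, where the line takes the
value `q`, gives the identity.
-/

theorem quadratic_eq_mul_sub_mul_sub {R : Type*} [CommRing R] [NoZeroDivisors R]
    {a b c α β : R} (hαβ : α ≠ β) (hα : a * α ^ 2 + b * α + c = 0)
    (hβ : a * β ^ 2 + b * β + c = 0) (x : R) :
    a * x ^ 2 + b * x + c = a * (x - α) * (x - β) := by
  have hsum : a * (α + β) + b = 0 := by
    have h : (a * (α + β) + b) * (α - β) = 0 := by linear_combination hα - hβ
    exact (mul_eq_zero.mp h).resolve_right (sub_ne_zero.mpr hαβ)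
  linear_combination (x - α) * hsum + hα

theorem parabolic_power_theorem_general (a b c m n p q α β : ℝ)
    (hαβ : α ≠ β)
    (hq : q = m * p + n)
    (hα : a * α ^ 2 + b * α + c = m * α + n)
    (hβ : a * β ^ 2 + b * β + c = m * β + n) :
    a * (α - p) * (β - p) = a * p ^ 2 + b * p + c - q := by
  have hfactor := quadratic_eq_mul_sub_mul_sub (a := a) (b := b - m) (c := c - n) hαβ
    (by linear_combination hα) (by linear_combination hβ) p
  linear_combination hq - hfactor

/-- Parabolic Power Theorem: for a line `y = m x + n` through `(p, q)` meeting the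
parabola `y = a x² + b x + c` at abscissas `α, β`, one has
`a (α − p)(β − p) = a p² + b p + c − q`, independent of the line. -/
theorem parabolic_power_theorem (a b c m n p q α β : ℝ)
    (ha : a ≠ 0) (hαβ : α ≠ β)
    (hq : q = m * p + n)
    (hα : a * α ^ 2 + b * α + c = m * α + n)
    (hβ : a * β ^ 2 + b * β + c = m * β + n) :
    a * (α - p) * (β - p) = a * p ^ 2 + b * p + c - q :=
  parabolic_power_theorem_general a b c m n p q α β hαβ hq hα hβ
end

section
/- Let a < b < c be real numbers and put A = (a, a²), B = (b, b²), C = (c, c²) on the parabola y = x². Let ℓ_A be the line through A with slope a + (b + c)/2 (the DA bisector of the interior angle at A, i.e. the line AA' where A' = ((b+c)/2, ((b+c)/2)²)), and let BC be the line y = (b + c)x − bc through B and C. Then ℓ_A and BC meet in a unique point D, D.1 = (2bc − ab − ac)/(b + c − 2a), and (D.1 − b)·(c − a) = (c − D.1)·(b − a); that is, the DA norms satisfy |BD| : |DC| = |AB| : |AC|. -/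
/-! Eliminating `y` from the two line equations gives `D.1 * (b + c - 2a) = 2bc - ab - ac`;
expanded, the DA ratio identity `(D.1 - b)(c - a) = (c - D.1)(b - a)` is the same linear
equation in `D.1`. -/

theorem existsUnique_inter_of_slope_ne {m₁ m₂ k₁ k₂ : ℝ} (h : m₁ ≠ m₂) :
    ∃! D : ℝ × ℝ, D.2 = m₁ * D.1 - k₁ ∧ D.2 = m₂ * D.1 - k₂ := by
  have hm : m₁ - m₂ ≠ 0 := sub_ne_zero.mpr h
  set x₀ := (k₁ - k₂) / (m₁ - m₂) with hx₀
  refine ⟨(x₀, m₂ * x₀ - k₂), ⟨?_, rfl⟩, ?_⟩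
  · rw [hx₀]
    field_simp
    ring
  · rintro ⟨x, y⟩ ⟨h₁, h₂⟩
    have hx : x = x₀ := by
      rw [hx₀, eq_div_iff hm]
      linarith
    subst hx
    exact Prod.ext rfl h₂

theorem da_ratio_iff (a b c x : ℝ) :
    (x - b) * (c - a) = (c - x) * (b - a) ↔ x * (b + c - 2 * a) = 2 * b * c - a * b - a * c := by
  constructor <;> intro h <;> linarith

/-- DA angle-bisector theorem: for `a < b < c`, the DA bisector at `A` (the line through
`(a, a²)` with slope `a + (b+c)/2`) meets the side line `BC : y = (b+c)x − bc` in a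
unique point `D`, with `D.1 = (2bc − ab − ac)/(b + c − 2a)` and
`(D.1 − b)(c − a) = (c − D.1)(b − a)`, i.e. `|BD| : |DC| = |AB| : |AC|` in DA norm. -/
theorem da_angle_bisector_theorem (a b c : ℝ) (hab : a < b) (hbc : b < c) :
    (∃! D : ℝ × ℝ,
        D.2 = (a + (b + c) / 2) * D.1 - a * (b + c) / 2 ∧
        D.2 = (b + c) * D.1 - b * c) ∧
    ∀ D : ℝ × ℝ,
      D.2 = (a + (b + c) / 2) * D.1 - a * (b + c) / 2 →
      D.2 = (b + c) * D.1 - b * c →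
      D.1 = (2 * b * c - a * b - a * c) / (b + c - 2 * a) ∧
      (D.1 - b) * (c - a) = (c - D.1) * (b - a) := by
  have hden : b + c - 2 * a ≠ 0 := by linarith
  refine ⟨existsUnique_inter_of_slope_ne fun h ↦ hden (by linarith), fun D h₁ h₂ ↦ ?_⟩
  have hD : D.1 * (b + c - 2 * a) = 2 * b * c - a * b - a * c := by linarith
  exact ⟨(eq_div_iff hden).mpr hD, (da_ratio_iff a b c D.1).mpr hD⟩
end

section
/- Let a < b < c be real numbers. The lines ℓ_A : y = (a + (b + c)/2)x − a(b + c)/2 and ℓ_C : y = (c + (a + b)/2)x − c(a + b)/2 (the DA bisectors of the interior angles at A = (a,a²) and C = (c,c²) of the triangle inscribed in y = x²) intersect in a unique point, and the first coordinate of this point equals b. Hence the intersection lies on the vertical line x = b, which is the DA bisector of the negative interior angle at B = (b,b²); consequently the three interior DA angle bisectors of the triangle concur at a single finite point (the DA incenter). -/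
/-! The slopes of `ℓ_A` and `ℓ_C` differ by `(c - a) / 2 ≠ 0`, so the two lines meet in at most
one point. The point `(b, (b (a + b + c) - a c) / 2)`, whose second coordinate is symmetric in `a`
and `c`, lies on both of them. -/

theorem Prod.eq_of_mem_lines_of_slope_ne {m₁ m₂ k₁ k₂ : ℝ} (hm : m₁ ≠ m₂) {P Q : ℝ × ℝ}
    (hP₁ : P.2 = m₁ * P.1 - k₁) (hP₂ : P.2 = m₂ * P.1 - k₂)
    (hQ₁ : Q.2 = m₁ * Q.1 - k₁) (hQ₂ : Q.2 = m₂ * Q.1 - k₂) : P = Q := by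
  have hm' : m₁ - m₂ ≠ 0 := sub_ne_zero.mpr hm
  have h₁ : P.1 = Q.1 :=
    mul_left_cancel₀ hm' (by linear_combination hP₂ - hP₁ - hQ₂ + hQ₁)
  exact Prod.ext h₁ (by rw [hP₁, hQ₁, h₁])

/-- DA incenter: for `a < b < c`, the DA bisectors
`ℓ_A : y = (a + (b+c)/2)x − a(b+c)/2` and `ℓ_C : y = (c + (a+b)/2)x − c(a+b)/2`
meet in a unique point, whose first coordinate is `b`; hence it lies on the vertical
bisector `x = b` of the negative angle at `B`, so the three DA bisectors concur. -/
theorem da_incenter_exists (a b c : ℝ) (hab : a < b) (hbc : b < c) :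
    (∃! P : ℝ × ℝ,
        P.2 = (a + (b + c) / 2) * P.1 - a * (b + c) / 2 ∧
        P.2 = (c + (a + b) / 2) * P.1 - c * (a + b) / 2) ∧
    ∀ P : ℝ × ℝ,
      P.2 = (a + (b + c) / 2) * P.1 - a * (b + c) / 2 →
      P.2 = (c + (a + b) / 2) * P.1 - c * (a + b) / 2 →
      P.1 = b := by
  set I : ℝ × ℝ := (b, (b * (a + b + c) - a * c) / 2)
  have hIA : I.2 = (a + (b + c) / 2) * I.1 - a * (b + c) / 2 := by simp only [I]; ring
  have hIC : I.2 = (c + (a + b) / 2) * I.1 - c * (a + b) / 2 := by simp only [I]; ring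
  have hslope : a + (b + c) / 2 ≠ c + (a + b) / 2 := by linarith
  have eq_I : ∀ P : ℝ × ℝ, P.2 = (a + (b + c) / 2) * P.1 - a * (b + c) / 2 →
      P.2 = (c + (a + b) / 2) * P.1 - c * (a + b) / 2 → P = I :=
    fun _ hPA hPC => Prod.eq_of_mem_lines_of_slope_ne hslope hPA hPC hIA hIC
  exact ⟨⟨I, ⟨hIA, hIC⟩, fun P hP => eq_I P hP.1 hP.2⟩,
    fun P hPA hPC => by rw [eq_I P hPA hPC]⟩
end

section
/- Let a < b < c be reals. Define the three lines ℓ_A : y = (a + (b+c)/2)x − a(b+c)/2, ℓ_B : y = (b + (c+a)/2)x − b(c+a)/2, ℓ_C : y = (c + (a+b)/2)x − c(a+b)/2 (the bisectors of the positive difference angles at the vertices A = (a,a²), B = (b,b²), C = (c,c²) of the triangle inscribed in y = x²). These lines are pairwise nonparallel; let I = ℓ_A ∩ ℓ_C, I_A = ℓ_A ∩ ℓ_B, I_C = ℓ_C ∩ ℓ_B. Then the centroid (I + I_A + I_C)/3 of the bisector triangle equals the midpoint of G and G_T, where G = ((a+b+c)/3, (a²+b²+c²)/3) is the centroid of A,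 B, C and G_T = ((a+b+c)/3, (ab+bc+ca)/3) is the centroid of the tangent triangle with vertices ((b+c)/2, bc), ((c+a)/2, ca), ((a+b)/2, ab). Explicitly, (I + I_A + I_C)/3 = ((a+b+c)/3, (a²+b²+c²+ab+bc+ca)/6). -/
/-!
Two bisectors of the inscribed triangle meet exactly above the third vertex: the bisectors at
`a` and `c` differ by `(a - c) / 2 * (x - b)`, so they cross at `x = b`. Hence the bisector
triangle has abscissae `a, b, c`, and its ordinates sum cyclically to
`(a² + b² + c² + ab + bc + ca) / 2`.
-/

/-- `bisector a b c` is the line `ℓ_A`; its cyclic shifts `bisector b c a`, `bisector c a b`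
are `ℓ_B`, `ℓ_C`. -/
noncomputable def bisector (a b c x : ℝ) : ℝ := (a + (b + c) / 2) * x - a * (b + c) / 2

lemma bisector_sub_bisector (a b c x : ℝ) :
    bisector a b c x - bisector c a b x = (a - c) / 2 * (x - b) := by
  unfold bisector; ring

lemma eq_of_bisector_eq_bisector {a b c : ℝ} (hac : a ≠ c) {p : ℝ × ℝ}
    (h₁ : p.2 = bisector a b c p.1) (h₂ : p.2 = bisector c a b p.1) :
    p = (b, bisector a b c b) := by
  have hx : p.1 = b := by
    have h : (a - c) / 2 * (p.1 - b) = 0 := by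
      rw [← bisector_sub_bisector, ← h₁, ← h₂, sub_self]
    have hac' : (a - c) / 2 ≠ 0 := div_ne_zero (sub_ne_zero.mpr hac) two_ne_zero
    exact sub_eq_zero.mp ((mul_eq_zero.mp h).resolve_left hac')
  ext
  · exact hx
  · rw [h₁, hx]

lemma bisector_cyclic_sum (a b c : ℝ) :
    bisector a b c b + bisector b c a c + bisector c a b a =
      (a ^ 2 + b ^ 2 + c ^ 2 + a * b + b * c + c * a) / 2 := by
  unfold bisector; ring

/-- Centroid of the bisector triangle: for `a < b < c`, the three bisector lines are
pairwise nonparallel, and the centroid of the bisector triangle `I, I_A, I_C` equals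
`((a+b+c)/3, (a²+b²+c²+ab+bc+ca)/6)`, the midpoint of the centroid
`G = ((a+b+c)/3, (a²+b²+c²)/3)` and the tangent-triangle centroid
`G_T = ((a+b+c)/3, (ab+bc+ca)/3)`. -/
theorem bisector_triangle_centroid (a b c : ℝ) (hab : a < b) (hbc : b < c)
    (I IA IC : ℝ × ℝ)
    (hI1 : I.2 = (a + (b + c) / 2) * I.1 - a * (b + c) / 2)
    (hI2 : I.2 = (c + (a + b) / 2) * I.1 - c * (a + b) / 2)
    (hIA1 : IA.2 = (a + (b + c) / 2) * IA.1 - a * (b + c) / 2)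
    (hIA2 : IA.2 = (b + (c + a) / 2) * IA.1 - b * (c + a) / 2)
    (hIC1 : IC.2 = (c + (a + b) / 2) * IC.1 - c * (a + b) / 2)
    (hIC2 : IC.2 = (b + (c + a) / 2) * IC.1 - b * (c + a) / 2) :
    (a + (b + c) / 2 ≠ b + (c + a) / 2 ∧
     b + (c + a) / 2 ≠ c + (a + b) / 2 ∧
     a + (b + c) / 2 ≠ c + (a + b) / 2) ∧
    ((I.1 + IA.1 + IC.1) / 3, (I.2 + IA.2 + IC.2) / 3) =
      (((a + b + c) / 3 : ℝ), (a ^ 2 + b ^ 2 + c ^ 2 + a * b + b * c + c * a) / 6) ∧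
    ((I.1 + IA.1 + IC.1) / 3, (I.2 + IA.2 + IC.2) / 3) =
      ((((a + b + c) / 3 + (a + b + c) / 3) / 2 : ℝ),
       ((a ^ 2 + b ^ 2 + c ^ 2) / 3 + (a * b + b * c + c * a) / 3) / 2) := by
  obtain rfl := eq_of_bisector_eq_bisector (hab.trans hbc).ne hI1 hI2
  obtain rfl := eq_of_bisector_eq_bisector hab.ne' hIA2 hIA1
  obtain rfl := eq_of_bisector_eq_bisector hbc.ne' hIC1 hIC2
  have hcentroid : ((b + c + a) / 3, (bisector a b c b + bisector b c a c + bisector c a b a) / 3) =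
      (((a + b + c) / 3 : ℝ), (a ^ 2 + b ^ 2 + c ^ 2 + a * b + b * c + c * a) / 6) := by
    rw [bisector_cyclic_sum]
    ext <;> ring
  refine ⟨⟨?_, ?_, ?_⟩, hcentroid, hcentroid.trans ?_⟩
  · intro h; linarith
  · intro h; linarith
  · intro h; linarith
  · ext <;> ring
end

section
/- Let a < b < c be real numbers, and let D = (d, d') be a point with c < d (in particular d ≠ a and d ≠ c). Then (c² − d')/(c − d) − (a² − d')/(a − d) = c − a holds if and only if d' = d². That is, the quadrilateral with vertices A = (a,a²), B = (b,b²), C = (c,c²), D = (d,d') has opposite difference angles summing to zero if and only if it is inscribed in the parabola y = x² (whose axis is parallel to the vertical projective direction). -/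
/-!
Write `D = (d, d')` and `e = d² − d'` for the vertical offset of `D` from the parabola. Since
`x² − d' = (x − d)(x + d) + e`, the slope from `D` to `(x, x²)` is `x + d + e / (x − d)`. The
difference of the slopes at `x = c` and `x = a` is therefore `c − a` plus
`e · (1/(c − d) − 1/(a − d))`, and the bracket vanishes only when `a = c`. So the angle condition
holds exactly when `e = 0`.
-/

variable {K : Type*} [Field K]

theorem sq_sub_div_sub_eq {x d e : K} (hx : x ≠ d) :
    (x ^ 2 - e) / (x - d) = x + d + (d ^ 2 - e) / (x - d) := by
  have hxd : x - d ≠ 0 := sub_ne_zero.mpr hx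
  field_simp
  ring

theorem sq_sub_div_sub_sub_sq_sub_div_sub {a c d e : K} (ha : a ≠ d) (hc : c ≠ d) :
    (c ^ 2 - e) / (c - d) - (a ^ 2 - e) / (a - d)
      = c - a + (d ^ 2 - e) * ((c - d)⁻¹ - (a - d)⁻¹) := by
  rw [sq_sub_div_sub_eq ha, sq_sub_div_sub_eq hc]
  ring

theorem inv_sub_ne_inv_sub {a c d : K} (hac : a ≠ c) : (c - d)⁻¹ ≠ (a - d)⁻¹ := by
  rw [Ne, inv_inj, sub_left_inj]
  exact hac.symm

theorem sq_sub_div_sub_sub_sq_sub_div_sub_eq_iff {a c d e : K}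
    (hac : a ≠ c) (ha : a ≠ d) (hc : c ≠ d) :
    (c ^ 2 - e) / (c - d) - (a ^ 2 - e) / (a - d) = c - a ↔ e = d ^ 2 := by
  rw [sq_sub_div_sub_sub_sq_sub_div_sub ha hc, add_eq_left,
    mul_eq_zero_iff_right (sub_ne_zero.mpr (inv_sub_ne_inv_sub hac)), sub_eq_zero, eq_comm]

/-- Characterization of parabolically inscribed quadrilaterals: for `a < b < c < d`
and `D = (d, d')`, the opposite difference angles of `A, B, C, D` sum to zero,
i.e. `(c² − d')/(c − d) − (a² − d')/(a − d) = c − a`, iff `d' = d²`, i.e. iff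
the quadrilateral is inscribed in the parabola `y = x²`. -/
theorem parabolic_quadrilateral_characterization (a b c d d' : ℝ)
    (hab : a < b) (hbc : b < c) (hcd : c < d) :
    (c ^ 2 - d') / (c - d) - (a ^ 2 - d') / (a - d) = c - a ↔ d' = d ^ 2 := by
  have hac : a < c := hab.trans hbc
  exact sq_sub_div_sub_sub_sq_sub_div_sub_eq_iff hac.ne (hac.trans hcd).ne hcd.ne
end

section
/- Let f(x) = α₁x² + β₁x + γ₁ and g(x) = α₂x² + β₂x + γ₂ be two quadratic functions, and let u ≠ v be real numbers with f(u) = g(u) and f(v) = g(v), so that A = (u, f(u)) and B = (v, f(v)) are two common points of their graphs. Let p, q, r, s be reals with p ≠ u, q ≠ u, r ≠ v, s ≠ v, and set P = (p, f(p)), Q = (q, g(q)), R = (r, f(r)), S = (s, g(s)). Suppose A, P, Q are collinear and B, R, S are collinear. Then P R is parallel to Q S; explicitly, (f(r) − f(p))·(s − q) = (g(s) − g(q))·(r − p). -/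
/-!
A chord of the parabola `y = a x² + b x + c` between abscissae `x` and `y` has slope
`a (x + y) + b`. Collinearity of `A, P, Q` therefore equates the chord slopes
`α₁ (p + u) + β₁ = α₂ (q + u) + β₂`, collinearity of `B, R, S` gives
`α₁ (r + v) + β₁ = α₂ (s + v) + β₂`, and the common chord `AB` gives
`α₁ (u + v) + β₁ = α₂ (u + v) + β₂`. Adding the first two and subtracting the third yields
`α₁ (r + p) + β₁ = α₂ (s + q) + β₂`, i.e. the chords `PR` and `QS` have the same slope.
-/

theorem Collinear.sub_mul_sub_eq {K : Type*} [Field K] {a b c : K × K}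
    (h : Collinear K ({a, b, c} : Set (K × K))) :
    (b.2 - a.2) * (c.1 - a.1) = (c.2 - a.2) * (b.1 - a.1) := by
  obtain ⟨p₀, d, hd⟩ := collinear_iff_exists_forall_eq_smul_vadd _ |>.mp h
  obtain ⟨ta, rfl⟩ := hd a (by simp)
  obtain ⟨tb, rfl⟩ := hd b (by simp)
  obtain ⟨tc, rfl⟩ := hd c (by simp)
  simp only [vadd_eq_add, Prod.fst_add, Prod.snd_add, Prod.smul_fst, Prod.smul_snd, smul_eq_mul]
  ring

theorem eq_of_collinear_of_sub_eq_mul {K : Type*} [Field K] {u p q y yP yQ m₁ m₂ : K}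
    (hp : p ≠ u) (hq : q ≠ u) (hP : yP - y = (p - u) * m₁) (hQ : yQ - y = (q - u) * m₂)
    (h : Collinear K ({(u, y), (p, yP), (q, yQ)} : Set (K × K))) :
    m₁ = m₂ := by
  have hcross := h.sub_mul_sub_eq
  simp only [hP, hQ] at hcross
  have hprod : (p - u) * (q - u) * (m₁ - m₂) = 0 := by linear_combination hcross
  simpa [sub_eq_zero, hp, hq] using hprod

theorem sub_eq_mul_of_forall_eq_quadratic {R : Type*} [CommRing R] {f : R → R} {a b c : R}
    (hf : ∀ x, f x = a * x ^ 2 + b * x + c) (x y : R) :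
    f x - f y = (x - y) * (a * (x + y) + b) := by
  rw [hf, hf]
  ring

theorem parabolic_intersecting_theorem_general
    (α₁ β₁ γ₁ α₂ β₂ γ₂ u v p q r s : ℝ) (f g : ℝ → ℝ)
    (hf : ∀ x, f x = α₁ * x ^ 2 + β₁ * x + γ₁)
    (hg : ∀ x, g x = α₂ * x ^ 2 + β₂ * x + γ₂)
    (huv : u ≠ v) (hu : f u = g u) (hv : f v = g v)
    (hpu : p ≠ u) (hqu : q ≠ u) (hrv : r ≠ v) (hsv : s ≠ v)
    (hAPQ : Collinear ℝ ({(u, f u), (p, f p), (q, g q)} : Set (ℝ × ℝ)))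
    (hBRS : Collinear ℝ ({(v, f v), (r, f r), (s, g s)} : Set (ℝ × ℝ))) :
    (f r - f p) * (s - q) = (g s - g q) * (r - p) := by
  have chord_f := sub_eq_mul_of_forall_eq_quadratic hf
  have chord_g := sub_eq_mul_of_forall_eq_quadratic hg
  have hA : α₁ * (p + u) + β₁ = α₂ * (q + u) + β₂ :=
    eq_of_collinear_of_sub_eq_mul hpu hqu (chord_f p u) (hu ▸ chord_g q u) hAPQ
  have hB : α₁ * (r + v) + β₁ = α₂ * (s + v) + β₂ :=
    eq_of_collinear_of_sub_eq_mul hrv hsv (chord_f r v) (hv ▸ chord_g s v) hBRS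
  have hAB : α₁ * (u + v) + β₁ = α₂ * (u + v) + β₂ := by
    refine mul_left_cancel₀ (sub_ne_zero.mpr huv) ?_
    rw [← chord_f, ← chord_g, hu, hv]
  linear_combination (s - q) * chord_f r p - (r - p) * chord_g s q
    + (r - p) * (s - q) * (hA + hB - hAB)

/-- Parabolic analogue of the intersecting-circles theorem: two parabolas (graphs of
quadratics `f`, `g`) meet at `A = (u, f u)` and `B = (v, f v)`; a secant through `A`
meets them again at `P = (p, f p)`, `Q = (q, g q)`, a secant through `B` at
`R = (r, f r)`, `S = (s, g s)`. Then `PR ∥ QS`: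
`(f r − f p)(s − q) = (g s − g q)(r − p)`. -/
theorem parabolic_intersecting_theorem
    (α₁ β₁ γ₁ α₂ β₂ γ₂ u v p q r s : ℝ) (f g : ℝ → ℝ)
    (hα₁ : α₁ ≠ 0) (hα₂ : α₂ ≠ 0)
    (hf : ∀ x, f x = α₁ * x ^ 2 + β₁ * x + γ₁)
    (hg : ∀ x, g x = α₂ * x ^ 2 + β₂ * x + γ₂)
    (huv : u ≠ v) (hu : f u = g u) (hv : f v = g v)
    (hpu : p ≠ u) (hqu : q ≠ u) (hrv : r ≠ v) (hsv : s ≠ v)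
    (hAPQ : Collinear ℝ ({(u, f u), (p, f p), (q, g q)} : Set (ℝ × ℝ)))
    (hBRS : Collinear ℝ ({(v, f v), (r, f r), (s, g s)} : Set (ℝ × ℝ))) :
    (f r - f p) * (s - q) = (g s - g q) * (r - p) :=
  parabolic_intersecting_theorem_general α₁ β₁ γ₁ α₂ β₂ γ₂ u v p q r s f g hf hg huv hu hv hpu hqu
    hrv hsv hAPQ hBRS
end

section
/- Let e < a < b < d be real numbers with e + d = a + b (so that the chord DE of the parabola y = x² is parallel to the chord AB). Then the line AD (with equation y = (a + d)x − ad) and the line EB (with equation y = (e + b)x − eb) intersect in a unique point C, and the first coordinate of C equals (a + b)/2. Hence the vertical (singular) line through C bisects the DA length of the segment AB. -/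
/-! The slopes of `AD` and `EB` differ by `(a + d) - (e + b) = 2 (a - e) ≠ 0`, so the two lines meet
in exactly one point, whose abscissa is the quotient of the intercept difference `a d - e b` by the
slope difference. Eliminating `d = a + b - e` factors the intercept difference as
`(a - e) (a + b)`, so the abscissa is `(a + b) / 2`. -/

section LineIntersection

variable {K : Type*} [Field K] {m₁ m₂ c₁ c₂ : K}

theorem fst_eq_of_mem_lines (hm : m₁ ≠ m₂) {C : K × K}
    (h₁ : C.2 = m₁ * C.1 - c₁) (h₂ : C.2 = m₂ * C.1 - c₂) :
    C.1 = (c₁ - c₂) / (m₁ - m₂) := by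
  rw [eq_div_iff (sub_ne_zero.mpr hm)]
  linear_combination h₂ - h₁

theorem existsUnique_mem_lines (hm : m₁ ≠ m₂) :
    ∃! C : K × K, C.2 = m₁ * C.1 - c₁ ∧ C.2 = m₂ * C.1 - c₂ := by
  set x := (c₁ - c₂) / (m₁ - m₂)
  refine ⟨(x, m₁ * x - c₁), ⟨rfl, ?_⟩, fun C ⟨h₁, h₂⟩ => ?_⟩
  · have hx : (m₁ - m₂) * x = c₁ - c₂ := mul_div_cancel₀ _ (sub_ne_zero.mpr hm)
    linear_combination hx
  · have hx : C.1 = x := fst_eq_of_mem_lines hm h₁ h₂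
    exact Prod.ext hx (by rw [h₁, hx])

end LineIntersection

theorem da_brahmagupta_general (e a b d : ℝ)
    (hea : e < a) (hpar : e + d = a + b) :
    (∃! C : ℝ × ℝ,
        C.2 = (a + d) * C.1 - a * d ∧ C.2 = (e + b) * C.1 - e * b) ∧
    ∀ C : ℝ × ℝ,
      C.2 = (a + d) * C.1 - a * d → C.2 = (e + b) * C.1 - e * b →
      C.1 = (a + b) / 2 := by
  have hslope : (a + d) - (e + b) = 2 * (a - e) := by linear_combination hpar
  have hintercept : a * d - e * b = (a - e) * (a + b) := by linear_combination a * hpar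
  have hm : a + d ≠ e + b := fun h => by linarith
  refine ⟨existsUnique_mem_lines hm, fun C h₁ h₂ => ?_⟩
  rw [fst_eq_of_mem_lines hm h₁ h₂, hslope, hintercept]
  field_simp [(sub_pos.mpr hea).ne']

/-- DA version of Brahmagupta's theorem: with `e < a < b < d` on `y = x²` and
`e + d = a + b` (so chord `DE ∥ AB`), the chords `AD : y = (a+d)x − ad` and
`EB : y = (e+b)x − eb` intersect in a unique point `C`, and `C.1 = (a+b)/2`:
the singular (vertical) line through `C` bisects the DA length of `AB`. -/
theorem da_brahmagupta (e a b d : ℝ)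
    (hea : e < a) (hab : a < b) (hbd : b < d) (hpar : e + d = a + b) :
    (∃! C : ℝ × ℝ,
        C.2 = (a + d) * C.1 - a * d ∧ C.2 = (e + b) * C.1 - e * b) ∧
    ∀ C : ℝ × ℝ,
      C.2 = (a + d) * C.1 - a * d → C.2 = (e + b) * C.1 - e * b →
      C.1 = (a + b) / 2 :=
  da_brahmagupta_general e a b d hea hpar
end

section
/- Let A, B, C, D, E, F, M be points of ℝ × ℝ whose first coordinates are pairwise distinct, with A, B, C not collinear, D on the line BC, E on the line CA, F on the line AB, and M ≠ E. Suppose there exist reals α₁, β₁, γ₁ such that the graph of x ↦ α₁x² + β₁x + γ₁ contains A, E, F, and M, and reals α₂, β₂, γ₂ such that the graph of x ↦ α₂x² + β₂x + γ₂ contains C, D, E, and M. Then there exist reals α₃, β₃, γ₃ such that the graph of x ↦ α₃x² + β₃x + γ₃ contains B, F, D, and M. In other words, the three circumparabolas of the triples (A,E,F), (B,F,D), (C,D,E) pass through a common point M (the parabolic Miquel point). -/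
private lemma da_collinear_slope {P Q R : ℝ × ℝ}
    (h : Collinear ℝ ({P, Q, R} : Set (ℝ × ℝ))) :
    (R.2 - P.2) * (Q.1 - P.1) = (Q.2 - P.2) * (R.1 - P.1) := by
  obtain ⟨v, hv⟩ := (collinear_iff_of_mem (Set.mem_insert P _)).mp h
  obtain ⟨tQ, hQ⟩ := hv Q (by simp)
  obtain ⟨tR, hR⟩ := hv R (by simp)
  rw [hQ, hR]
  simp only [vadd_eq_add, Prod.fst_add, Prod.snd_add, Prod.smul_fst, Prod.smul_snd,
    smul_eq_mul]
  ring

private lemma da_collinear_of_slope {P Q R : ℝ × ℝ} (hPQ : P.1 ≠ Q.1)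
    (h : (R.2 - P.2) * (Q.1 - P.1) = (Q.2 - P.2) * (R.1 - P.1)) :
    Collinear ℝ ({P, Q, R} : Set (ℝ × ℝ)) := by
  have hq : Q.1 - P.1 ≠ 0 := sub_ne_zero_of_ne (Ne.symm hPQ)
  refine (collinear_iff_of_mem (Set.mem_insert P _)).mpr ⟨Q - P, ?_⟩
  intro p hp
  simp only [Set.mem_insert_iff, Set.mem_singleton_iff] at hp
  rcases hp with rfl | rfl | rfl
  · exact ⟨0, by simp⟩
  · exact ⟨1, by simp⟩
  · refine ⟨(p.1 - P.1) / (Q.1 - P.1), ?_⟩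
    have h1 : ((p.1 - P.1) / (Q.1 - P.1)) • (Q - P) + P = p := by
      apply Prod.ext
      · simp only [Prod.fst_add, Prod.smul_fst, Prod.fst_sub, smul_eq_mul]
        field_simp
        ring
      · simp only [Prod.snd_add, Prod.smul_snd, Prod.snd_sub, smul_eq_mul]
        field_simp
        linear_combination -h
    rw [vadd_eq_add, h1]

/-- DA version of Miquel's triangle theorem: with `D ∈ BC`, `E ∈ CA`, `F ∈ AB`,
if the circumparabolas (graphs of polynomials of degree ≤ 2) through `A, E, F`
and through `C, D, E` both pass through `M`, then so does a circumparabola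
through `B, F, D`: the three circumparabolas concur at the parabolic Miquel point. -/
theorem da_miquel_triangle (A B C D E F M : ℝ × ℝ)
    (hdist : ([A, B, C, D, E, F, M] : List (ℝ × ℝ)).Pairwise (fun P Q => P.1 ≠ Q.1))
    (hABC : ¬ Collinear ℝ ({A, B, C} : Set (ℝ × ℝ)))
    (hD : Collinear ℝ ({B, C, D} : Set (ℝ × ℝ)))
    (hE : Collinear ℝ ({C, A, E} : Set (ℝ × ℝ)))
    (hF : Collinear ℝ ({A, B, F} : Set (ℝ × ℝ)))
    (hME : M ≠ E)
    (h₁ : ∃ α β γ : ℝ,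
        α * A.1 ^ 2 + β * A.1 + γ = A.2 ∧ α * E.1 ^ 2 + β * E.1 + γ = E.2 ∧
        α * F.1 ^ 2 + β * F.1 + γ = F.2 ∧ α * M.1 ^ 2 + β * M.1 + γ = M.2)
    (h₂ : ∃ α β γ : ℝ,
        α * C.1 ^ 2 + β * C.1 + γ = C.2 ∧ α * D.1 ^ 2 + β * D.1 + γ = D.2 ∧
        α * E.1 ^ 2 + β * E.1 + γ = E.2 ∧ α * M.1 ^ 2 + β * M.1 + γ = M.2) :
    ∃ α β γ : ℝ,
      α * B.1 ^ 2 + β * B.1 + γ = B.2 ∧ α * F.1 ^ 2 + β * F.1 + γ = F.2 ∧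
      α * D.1 ^ 2 + β * D.1 + γ = D.2 ∧ α * M.1 ^ 2 + β * M.1 + γ = M.2 := by
  obtain ⟨α₁, β₁, γ₁, h1a, h1e, h1f, h1m⟩ := h₁
  obtain ⟨α₂, β₂, γ₂, h2c, h2d, h2e, h2m⟩ := h₂
  simp only [List.pairwise_cons, List.mem_cons, List.mem_singleton, List.not_mem_nil,
    forall_eq_or_imp, forall_eq, false_implies, forall_const, and_true,
    List.Pairwise.nil] at hdist
  obtain ⟨⟨hab, hac, had, hae, haf, ham⟩, ⟨hbc, hbd, hbe, hbf, hbm⟩,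
    ⟨hcd, hce, hcf, hcm⟩, ⟨hde, hdf, hdm⟩, ⟨hef, hem⟩, hfm⟩ := hdist
  -- abbreviations for x-coordinates
  set a := A.1 with ha_def
  set b := B.1 with hb_def
  set c := C.1 with hc_def
  set d := D.1 with hd_def
  set e := E.1 with he_def
  set f := F.1 with hf_def
  set m := M.1 with hm_def
  set ya := A.2
  set yb := B.2
  set yc := C.2
  set yd := D.2
  set ye := E.2
  set yf := F.2
  set ym := M.2
  have hem' : e - m ≠ 0 := sub_ne_zero_of_ne hem
  have haf' : f - a ≠ 0 := sub_ne_zero_of_ne (Ne.symm haf)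
  have hdc' : d - c ≠ 0 := sub_ne_zero_of_ne (Ne.symm hcd)
  have hec' : e - c ≠ 0 := sub_ne_zero_of_ne (Ne.symm hce)
  have hae' : a - e ≠ 0 := sub_ne_zero_of_ne hae
  have hcm' : c - m ≠ 0 := sub_ne_zero_of_ne hcm
  have hdf' : d - f ≠ 0 := sub_ne_zero_of_ne hdf
  -- β and γ relations between the two parabolas (they meet at E and M)
  have hβ : β₁ - β₂ + (α₁ - α₂) * (e + m) = 0 := by
    have h0 : (β₁ - β₂ + (α₁ - α₂) * (e + m)) * (e - m) = 0 := by
      linear_combination h1e - h2e - h1m + h2m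
    exact (mul_eq_zero.mp h0).resolve_right hem'
  have hγ : γ₁ - γ₂ - (α₁ - α₂) * e * m = 0 := by
    linear_combination h1e - h2e - e * hβ
  -- line equations
  have lF := da_collinear_slope hF  -- {A, B, F}
  have lD := da_collinear_slope hD  -- {B, C, D}
  have lE := da_collinear_slope hE  -- {C, A, E}
  -- slope relations
  have hB1 : yb - ya = (α₁ * (a + f) + β₁) * (b - a) := by
    have h0 : (yb - ya) * (f - a) = ((α₁ * (a + f) + β₁) * (b - a)) * (f - a) := by
      linear_combination -lF - (b - a) * (h1f - h1a)
    exact mul_right_cancel₀ haf' h0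
  have hB2 : yb - yc = (α₂ * (c + d) + β₂) * (b - c) := by
    have h0 : (yb - yc) * (d - c) = ((α₂ * (c + d) + β₂) * (b - c)) * (d - c) := by
      linear_combination lD - (b - c) * (h2d - h2c)
    exact mul_right_cancel₀ hdc' h0
  have hA2 : ya - yc = (α₂ * (c + e) + β₂) * (a - c) := by
    have h0 : (ya - yc) * (e - c) = ((α₂ * (c + e) + β₂) * (a - c)) * (e - c) := by
      linear_combination -lE - (a - c) * (h2e - h2c)
    exact mul_right_cancel₀ hec' h0
  -- hLE2 : α₂ (c - m) = α₁ (a - m)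
  have hLE1 : ((α₁ - α₂) * (a - m) + α₂ * (a - c)) * (a - e) = 0 := by
    linear_combination hA2 - a * hβ - hγ + h1a - h2c
  have hLE1' : (α₁ - α₂) * (a - m) + α₂ * (a - c) = 0 :=
    (mul_eq_zero.mp hLE1).resolve_right hae'
  have hLE2 : α₂ * (c - m) = α₁ * (a - m) := by linear_combination -hLE1'
  -- non-collinearity gives the slope inequality
  have hNC : α₁ * (a + f) + β₁ ≠ α₂ * (c + e) + β₂ := by
    intro hcon
    apply hABC
    apply da_collinear_of_slope hab
    show (yc - ya) * (b - a) = (yb - ya) * (c - a)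
    linear_combination (-(b - a)) * hA2 - (c - a) * hB1 - (b - a) * (c - a) * hcon
  -- α₁ ≠ 0
  have hα₁ : α₁ ≠ 0 := by
    intro h0
    have hα₂ : α₂ = 0 := by
      have := hLE2
      rw [h0] at this
      simpa [hcm'] using (mul_eq_zero.mp (by linarith [this] : α₂ * (c - m) = 0)).resolve_right hcm'
    apply hNC
    rw [h0, hα₂]
    linear_combination hβ - (e + m) * h0 + (e + m) * hα₂
  -- the key equation hK
  have hK : (α₂ * (c + e) + β₂) * (a - c) + (α₁ * (a + f) + β₁) * (b - a)
      - (α₂ * (c + d) + β₂) * (b - c) = 0 := by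
    linear_combination -(hA2 + hB1 - hB2)
  -- eliminate to get W2 = 0
  have hW2 : α₁ * ((a - m) * (-(c*e) + c*d + b*m + b*e - b*d - b*c - a*m + a*c)
      + (c - m) * (-(b*m) + b*f - b*e + a*m - a*f + a*e + a*b - a^2)) = 0 := by
    linear_combination (c - m) * hK
      - (-(c*e) + c*d + b*m + b*e - b*d - b*c - a*m + a*c) * hLE2
      - (c - m) * (b - a) * hβ
  have hW : (a - m) * (-(c*e) + c*d + b*m + b*e - b*d - b*c - a*m + a*c)
      + (c - m) * (-(b*m) + b*f - b*e + a*m - a*f + a*e + a*b - a^2) = 0 :=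
    (mul_eq_zero.mp hW2).resolve_left hα₁
  -- the Miquel relation
  have hT3 : α₁ * (b - a) * (d - f) = (α₁ - α₂) * (d - e) * (b - m) := by
    have h0 : (α₁ * (b - a) * (d - f)) * (c - m)
        = ((α₁ - α₂) * (d - e) * (b - m)) * (c - m) := by
      linear_combination (-α₁) * hW - ((d - e) * (m - b)) * hLE2
    exact mul_right_cancel₀ hcm' h0
  -- the third parabola
  set t := (α₂ - α₁) * (d - e) / (d - f) with ht_def
  have ht : t * (d - f) = (α₂ - α₁) * (d - e) := by
    rw [ht_def]; field_simp
  have hT4 : (t * (b - m)) * (d - f) = (-(α₁ * (b - a))) * (d - f) := by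
    linear_combination (b - m) * ht + hT3
  have hT : t * (b - m) = -(α₁ * (b - a)) := mul_right_cancel₀ hdf' hT4
  refine ⟨α₁ + t, β₁ - t * (f + m), γ₁ + t * f * m, ?_, ?_, ?_, ?_⟩
  · linear_combination h1a - hB1 + (b - f) * hT
  · linear_combination h1f
  · linear_combination h2d + (d - m) * ht + d * hβ + hγ
  · linear_combination h1m
end

section
/- Let A, B, C, D, E, F, M be points of ℝ × ℝ whose first coordinates are pairwise distinct, forming a complete quadrilateral: A, B, E are collinear; C, D, E are collinear; B, C, F are collinear; A, D, F are collinear; and no three of A, B, C, D are collinear. Assume M ≠ B, and suppose there exist reals α₁, β₁, γ₁ with the graph of x ↦ α₁x² + β₁x + γ₁ containing A, B, F, M, and reals α₂, β₂, γ₂ with the graph of x ↦ α₂x² + β₂x + γ₂ containing B, C, E, M. Then there exist reals α₃, β₃, γ₃ with the graph of x ↦ α₃x² + β₃x + γ₃ containing C, D, F, M, and reals α₄, β₄, γ₄ with the graph of x ↦ α₄x² + β₄x + γ₄ containing D, A, E, M. In other words, the four circumparabolas of (A,B,F), (B,C,E), (C,D,F), (D,A,E) concur at a common point M. -/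
/-!
In difference-angle geometry the angle between two lines is the difference of their slopes.
A parabola `y = αx² + βx + γ` has chord slopes `α (p + q) + β`, so every point of it sees the
chord over `x = p, q` under the same angle `α (p - q)`; conversely a point seeing that chord
under this angle lies on the parabola. Since slope differences add exactly, the directed-angle
proof of Miquel's theorem goes through verbatim: the angle under which `M` sees `CF` is the sum
of the angles under which it sees `CB` and `BF`, which the two given parabolas and the four
lines of the quadrilateral identify with the angle under which `D` sees `CF`.
-/

noncomputable def chordSlope (P Q : ℝ × ℝ) : ℝ := (Q.2 - P.2) / (Q.1 - P.1)

def OnParabola (α β γ : ℝ) (P : ℝ × ℝ) : Prop := α * P.1 ^ 2 + β * P.1 + γ = P.2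

theorem Collinear.chordSlope_eq {s : Set (ℝ × ℝ)} (h : Collinear ℝ s) {P Q R S : ℝ × ℝ}
    (hPQ : P.1 ≠ Q.1) (hRS : R.1 ≠ S.1) (hP : P ∈ s := by simp) (hQ : Q ∈ s := by simp)
    (hR : R ∈ s := by simp) (hS : S ∈ s := by simp) :
    chordSlope P Q = chordSlope R S := by
  obtain ⟨p₀, v, hv⟩ := (collinear_iff_exists_forall_eq_smul_vadd s).1 h
  have direction : ∀ {X Y}, X ∈ s → Y ∈ s → X.1 ≠ Y.1 → chordSlope X Y = v.2 / v.1 := by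
    intro X Y hX hY hXY
    obtain ⟨a, rfl⟩ := hv X hX
    obtain ⟨b, rfl⟩ := hv Y hY
    have hv₁ : v.1 ≠ 0 := by rintro hv₁; simp [hv₁] at hXY
    unfold chordSlope
    simp only [vadd_eq_add, Prod.fst_add, Prod.snd_add, Prod.smul_fst, Prod.smul_snd,
      smul_eq_mul] at hXY ⊢
    field_simp
    ring
  rw [direction hP hQ hPQ, direction hR hS hRS]

theorem exists_onParabola {P Q R : ℝ × ℝ} (hPQ : P.1 ≠ Q.1) (hPR : P.1 ≠ R.1)
    (hQR : Q.1 ≠ R.1) :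
    ∃ α β γ, OnParabola α β γ P ∧ OnParabola α β γ Q ∧ OnParabola α β γ R := by
  have hPQ' := sub_ne_zero.2 hPQ
  have hPR' := sub_ne_zero.2 hPR
  have hQR' := sub_ne_zero.2 hQR
  -- `α` is the second divided difference of the three points.
  set α := (chordSlope P R - chordSlope Q R) / (P.1 - Q.1)
  set β := chordSlope P Q - α * (P.1 + Q.1)
  refine ⟨α, β, P.2 - α * P.1 ^ 2 - β * P.1, by unfold OnParabola; ring, ?_, ?_⟩ <;>
  · simp only [OnParabola, α, β, chordSlope]
    field_simp
    ring

namespace OnParabola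

variable {α β γ : ℝ} {P Q R S : ℝ × ℝ}

theorem chordSlope_eq (hP : OnParabola α β γ P) (hQ : OnParabola α β γ Q) (hPQ : P.1 ≠ Q.1) :
    chordSlope P Q = α * (P.1 + Q.1) + β := by
  rw [chordSlope, div_eq_iff (sub_ne_zero.2 hPQ.symm), ← hP, ← hQ]
  ring

theorem chordSlope_sub_chordSlope (hP : OnParabola α β γ P) (hQ : OnParabola α β γ Q)
    (hR : OnParabola α β γ R) (hRP : R.1 ≠ P.1) (hRQ : R.1 ≠ Q.1) :
    chordSlope R P - chordSlope R Q = α * (P.1 - Q.1) := by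
  rw [hR.chordSlope_eq hP hRP, hR.chordSlope_eq hQ hRQ]
  ring

theorem chordSlope_sub_chordSlope_eq (hP : OnParabola α β γ P) (hQ : OnParabola α β γ Q)
    (hR : OnParabola α β γ R) (hS : OnParabola α β γ S)
    (hRP : R.1 ≠ P.1) (hRQ : R.1 ≠ Q.1) (hSP : S.1 ≠ P.1) (hSQ : S.1 ≠ Q.1) :
    chordSlope R P - chordSlope R Q = chordSlope S P - chordSlope S Q := by
  rw [hP.chordSlope_sub_chordSlope hQ hR hRP hRQ, hP.chordSlope_sub_chordSlope hQ hS hSP hSQ]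

theorem of_chordSlope_sub_chordSlope_eq (hP : OnParabola α β γ P) (hQ : OnParabola α β γ Q)
    (hR : OnParabola α β γ R) (hPQ : P.1 ≠ Q.1) (hRP : R.1 ≠ P.1) (hRQ : R.1 ≠ Q.1)
    (hSP : S.1 ≠ P.1) (hSQ : S.1 ≠ Q.1)
    (h : chordSlope S P - chordSlope S Q = chordSlope R P - chordSlope R Q) :
    OnParabola α β γ S := by
  rw [hP.chordSlope_sub_chordSlope hQ hR hRP hRQ] at h
  have hSP' := sub_ne_zero.2 hSP
  have hSQ' := sub_ne_zero.2 hSQ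
  unfold chordSlope at h
  unfold OnParabola at hP hQ ⊢
  rw [← hP, ← hQ] at h
  field_simp at h
  have hPQS : (P.1 - Q.1) * (α * S.1 ^ 2 + β * S.1 + γ - S.2) = 0 := by linear_combination -h
  exact sub_eq_zero.1 ((mul_eq_zero.1 hPQS).resolve_left (sub_ne_zero.2 hPQ))

end OnParabola

theorem da_miquel_quadrilateral_general (A B C D E F M : ℝ × ℝ)
    (hdist : ([A, B, C, D, E, F, M] : List (ℝ × ℝ)).Pairwise (fun P Q => P.1 ≠ Q.1))
    (hABE : Collinear ℝ ({A, B, E} : Set (ℝ × ℝ)))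
    (hCDE : Collinear ℝ ({C, D, E} : Set (ℝ × ℝ)))
    (hBCF : Collinear ℝ ({B, C, F} : Set (ℝ × ℝ)))
    (hADF : Collinear ℝ ({A, D, F} : Set (ℝ × ℝ)))
    (h₁ : ∃ α β γ : ℝ,
        α * A.1 ^ 2 + β * A.1 + γ = A.2 ∧ α * B.1 ^ 2 + β * B.1 + γ = B.2 ∧
        α * F.1 ^ 2 + β * F.1 + γ = F.2 ∧ α * M.1 ^ 2 + β * M.1 + γ = M.2)
    (h₂ : ∃ α β γ : ℝ,
        α * B.1 ^ 2 + β * B.1 + γ = B.2 ∧ α * C.1 ^ 2 + β * C.1 + γ = C.2 ∧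
        α * E.1 ^ 2 + β * E.1 + γ = E.2 ∧ α * M.1 ^ 2 + β * M.1 + γ = M.2) :
    (∃ α β γ : ℝ,
        α * C.1 ^ 2 + β * C.1 + γ = C.2 ∧ α * D.1 ^ 2 + β * D.1 + γ = D.2 ∧
        α * F.1 ^ 2 + β * F.1 + γ = F.2 ∧ α * M.1 ^ 2 + β * M.1 + γ = M.2) ∧
    (∃ α β γ : ℝ,
        α * D.1 ^ 2 + β * D.1 + γ = D.2 ∧ α * A.1 ^ 2 + β * A.1 + γ = A.2 ∧
        α * E.1 ^ 2 + β * E.1 + γ = E.2 ∧ α * M.1 ^ 2 + β * M.1 + γ = M.2) := by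
  simp only [List.pairwise_cons, List.mem_cons, List.not_mem_nil, forall_eq_or_imp, or_false,
    forall_eq, List.Pairwise.nil, and_true, IsEmpty.forall_iff, forall_const] at hdist
  obtain ⟨⟨hAB, -, hAD, hAE, hAF, hAM⟩, ⟨hBC, -, hBE, hBF, hBM⟩, ⟨hCD, hCE, hCF, hCM⟩,
    ⟨hDE, hDF, -⟩, ⟨-, hEM⟩, hFM⟩ := hdist
  obtain ⟨α₁, β₁, γ₁, hA₁, hB₁, hF₁, hM₁⟩ := h₁
  obtain ⟨α₂, β₂, γ₂, hB₂, hC₂, hE₂, hM₂⟩ := h₂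
  have lineAB : chordSlope E B = chordSlope A B := hABE.chordSlope_eq hBE.symm hAB
  have lineCD : chordSlope E C = chordSlope D C := hCDE.chordSlope_eq hCE.symm hCD.symm
  have lineCD' : chordSlope C E = chordSlope D E := hCDE.chordSlope_eq hCE hDE
  have lineBC : chordSlope F B = chordSlope C B := hBCF.chordSlope_eq hBF.symm hBC.symm
  have lineAD : chordSlope A F = chordSlope D F := hADF.chordSlope_eq hAF hDF
  have lineAD' : chordSlope F A = chordSlope D A := hADF.chordSlope_eq hAF.symm hAD.symm
  have angleBF : chordSlope M B - chordSlope M F = chordSlope A B - chordSlope A F :=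
    OnParabola.chordSlope_sub_chordSlope_eq hB₁ hF₁ hM₁ hA₁ hBM.symm hFM.symm hAB hAF
  have angleAB : chordSlope M A - chordSlope M B = chordSlope F A - chordSlope F B :=
    OnParabola.chordSlope_sub_chordSlope_eq hA₁ hB₁ hM₁ hF₁ hAM.symm hBM.symm hAF.symm hBF.symm
  have angleCB : chordSlope M C - chordSlope M B = chordSlope E C - chordSlope E B :=
    OnParabola.chordSlope_sub_chordSlope_eq hC₂ hB₂ hM₂ hE₂ hCM.symm hBM.symm hCE.symm hBE.symm
  have angleBE : chordSlope M B - chordSlope M E = chordSlope C B - chordSlope C E :=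
    OnParabola.chordSlope_sub_chordSlope_eq hB₂ hE₂ hM₂ hC₂ hBM.symm hEM.symm hBC.symm hCE
  constructor
  · obtain ⟨α, β, γ, hC, hF, hD⟩ := exists_onParabola hCF hCD hDF.symm
    exact ⟨α, β, γ, hC, hD, hF, hC.of_chordSlope_sub_chordSlope_eq hF hD hCF hCD.symm hDF
      hCM.symm hFM.symm (by linarith)⟩
  · obtain ⟨α, β, γ, hA, hE, hD⟩ := exists_onParabola hAE hAD hDE.symm
    exact ⟨α, β, γ, hD, hA, hE, hA.of_chordSlope_sub_chordSlope_eq hE hD hAE hAD.symm hDE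
      hAM.symm hEM.symm (by linarith)⟩

/-- DA version of Miquel's quadrilateral theorem: for a complete quadrilateral
`A, B, C, D` with diagonal points `E = AB ∩ CD`, `F = BC ∩ AD`, if the
circumparabolas through `A, B, F` and through `B, C, E` both pass through `M`,
then so do circumparabolas through `C, D, F` and through `D, A, E`: the four
circumparabolas concur at a common point. -/
theorem da_miquel_quadrilateral (A B C D E F M : ℝ × ℝ)
    (hdist : ([A, B, C, D, E, F, M] : List (ℝ × ℝ)).Pairwise (fun P Q => P.1 ≠ Q.1))
    (hABE : Collinear ℝ ({A, B, E} : Set (ℝ × ℝ)))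
    (hCDE : Collinear ℝ ({C, D, E} : Set (ℝ × ℝ)))
    (hBCF : Collinear ℝ ({B, C, F} : Set (ℝ × ℝ)))
    (hADF : Collinear ℝ ({A, D, F} : Set (ℝ × ℝ)))
    (hABC : ¬ Collinear ℝ ({A, B, C} : Set (ℝ × ℝ)))
    (hABD : ¬ Collinear ℝ ({A, B, D} : Set (ℝ × ℝ)))
    (hACD : ¬ Collinear ℝ ({A, C, D} : Set (ℝ × ℝ)))
    (hBCD : ¬ Collinear ℝ ({B, C, D} : Set (ℝ × ℝ)))
    (hMB : M ≠ B)
    (h₁ : ∃ α β γ : ℝ,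
        α * A.1 ^ 2 + β * A.1 + γ = A.2 ∧ α * B.1 ^ 2 + β * B.1 + γ = B.2 ∧
        α * F.1 ^ 2 + β * F.1 + γ = F.2 ∧ α * M.1 ^ 2 + β * M.1 + γ = M.2)
    (h₂ : ∃ α β γ : ℝ,
        α * B.1 ^ 2 + β * B.1 + γ = B.2 ∧ α * C.1 ^ 2 + β * C.1 + γ = C.2 ∧
        α * E.1 ^ 2 + β * E.1 + γ = E.2 ∧ α * M.1 ^ 2 + β * M.1 + γ = M.2) :
    (∃ α β γ : ℝ,
        α * C.1 ^ 2 + β * C.1 + γ = C.2 ∧ α * D.1 ^ 2 + β * D.1 + γ = D.2 ∧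
        α * F.1 ^ 2 + β * F.1 + γ = F.2 ∧ α * M.1 ^ 2 + β * M.1 + γ = M.2) ∧
    (∃ α β γ : ℝ,
        α * D.1 ^ 2 + β * D.1 + γ = D.2 ∧ α * A.1 ^ 2 + β * A.1 + γ = A.2 ∧
        α * E.1 ^ 2 + β * E.1 + γ = E.2 ∧ α * M.1 ^ 2 + β * M.1 + γ = M.2) :=
  da_miquel_quadrilateral_general A B C D E F M hdist hABE hCDE hBCF hADF h₁ h₂
end

section
/- Let a, b, c be pairwise distinct real numbers and m an arbitrary real number. Define H_A = (m − a, (b + c)(m − a) − bc), H_B = (m − b, (c + a)(m − b) − ca), H_C = (m − c, (a + b)(m − c) − ab). Then each of H_A, H_B, H_C lies on the line y = m·x + (m(a + b + c) − m² − (ab + bc + ca)); in particular H_A, H_B, H_C are collinear, on a line whose slope m equals the Simson direction. -/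
/-! The ordinate of the foot `H_A` above the Simson line of slope `m` is
`(b + c - m)(m - a) - bc = m(a + b + c) - m² - (ab + bc + ca)`, an expression symmetric in
`a, b, c`; so the three feet lie on one line of slope `m`. -/

theorem collinear_of_forall_snd_eq_mul_fst_add {K : Type*} [Field K] {s : Set (K × K)} (m k : K)
    (h : ∀ p ∈ s, p.2 = m * p.1 + k) : Collinear K s := by
  refine collinear_iff_exists_forall_eq_smul_vadd s |>.mpr ⟨(0, k), (1, m), fun p hp => ⟨p.1, ?_⟩⟩
  ext <;> simp [h p hp, mul_comm]

theorem da_simson_general (a b c m : ℝ) :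
    ((b + c) * (m - a) - b * c =
        m * (m - a) + (m * (a + b + c) - m ^ 2 - (a * b + b * c + c * a))) ∧
    ((c + a) * (m - b) - c * a =
        m * (m - b) + (m * (a + b + c) - m ^ 2 - (a * b + b * c + c * a))) ∧
    ((a + b) * (m - c) - a * b =
        m * (m - c) + (m * (a + b + c) - m ^ 2 - (a * b + b * c + c * a))) ∧
    Collinear ℝ ({(m - a, (b + c) * (m - a) - b * c),
                  (m - b, (c + a) * (m - b) - c * a),
                  (m - c, (a + b) * (m - c) - a * b)} : Set (ℝ × ℝ)) := by
  have hA : (b + c) * (m - a) - b * c =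
      m * (m - a) + (m * (a + b + c) - m ^ 2 - (a * b + b * c + c * a)) := by ring
  have hB : (c + a) * (m - b) - c * a =
      m * (m - b) + (m * (a + b + c) - m ^ 2 - (a * b + b * c + c * a)) := by ring
  have hC : (a + b) * (m - c) - a * b =
      m * (m - c) + (m * (a + b + c) - m ^ 2 - (a * b + b * c + c * a)) := by ring
  refine ⟨hA, hB, hC, collinear_of_forall_snd_eq_mul_fst_add m
    (m * (a + b + c) - m ^ 2 - (a * b + b * c + c * a)) ?_⟩
  rintro p (rfl | rfl | rfl) <;> assumption

/-- DA Simson theorem: for pairwise distinct `a, b, c` and any Simson direction `m`,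
the feet `H_A = (m−a, (b+c)(m−a) − bc)`, `H_B = (m−b, (c+a)(m−b) − ca)`,
`H_C = (m−c, (a+b)(m−c) − ab)` all lie on the line
`y = m x + (m(a+b+c) − m² − (ab+bc+ca))`; in particular they are collinear on a
line of slope `m`. -/
theorem da_simson (a b c m : ℝ) (hab : a ≠ b) (hbc : b ≠ c) (hac : a ≠ c) :
    ((b + c) * (m - a) - b * c =
        m * (m - a) + (m * (a + b + c) - m ^ 2 - (a * b + b * c + c * a))) ∧
    ((c + a) * (m - b) - c * a =
        m * (m - b) + (m * (a + b + c) - m ^ 2 - (a * b + b * c + c * a))) ∧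
    ((a + b) * (m - c) - a * b =
        m * (m - c) + (m * (a + b + c) - m ^ 2 - (a * b + b * c + c * a))) ∧
    Collinear ℝ ({(m - a, (b + c) * (m - a) - b * c),
                  (m - b, (c + a) * (m - b) - c * a),
                  (m - c, (a + b) * (m - c) - a * b)} : Set (ℝ × ℝ)) :=
  da_simson_general a b c m
end

section
/- Let κ ≠ 0 and a < b < c be real numbers. Consider the lines ℓ_B : y = κ(b + (c + a)/2)x − κ b(c + a)/2 and ℓ_C : y = κ(c + (a + b)/2)x − κ c(a + b)/2 (the bisectors of the positive difference angles at B = (b, κb²) and C = (c, κc²) of the triangle inscribed in y = κx²). Then ℓ_B and ℓ_C intersect in a unique point D, and D = (a, κ(a² + ab − bc + ca)/2), which is exactly the midpoint of the segment from A = (a, κa²) to A' = (a, κ(ab − bc + ca)), where A' is the foot of the vertical DA perpendicular from A to the side BC (the line y = κ(b + c)x − κbc). -/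
/-!
The bisectors at the vertices with parameters `u` and `v` differ by the linear function
`κ (u - v) / 2 · (x - w)`, so for `κ ≠ 0` and `u ≠ v` they meet exactly above the third vertex
`x = w`; evaluating either bisector there gives the midpoint of `A` and its vertical foot on `BC`.
-/

/-- The bisector at the vertex with parameter `u` of the triangle inscribed in `y = κ x²`
whose other vertices have parameters `v` and `w`, as a function of `x`. -/
noncomputable def parabolaBisector (κ u v w x : ℝ) : ℝ :=
  κ * (u + (v + w) / 2) * x - κ * u * (v + w) / 2

section

variable {κ u v w : ℝ}

theorem parabolaBisector_sub_parabolaBisector (x : ℝ) :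
    parabolaBisector κ u v w x - parabolaBisector κ v w u x = κ * (u - v) / 2 * (x - w) := by
  unfold parabolaBisector
  ring

theorem parabolaBisector_eq_parabolaBisector_iff (hκ : κ ≠ 0) (huv : u ≠ v) {x : ℝ} :
    parabolaBisector κ u v w x = parabolaBisector κ v w u x ↔ x = w := by
  have hslope : κ * (u - v) / 2 ≠ 0 := by
    have := sub_ne_zero.mpr huv
    positivity
  rw [← sub_eq_zero, parabolaBisector_sub_parabolaBisector, mul_eq_zero, sub_eq_zero,
    or_iff_right hslope]

theorem parabolaBisector_third :
    parabolaBisector κ u v w w = κ * (w ^ 2 + w * u - u * v + v * w) / 2 := by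
  unfold parabolaBisector
  ring

theorem parabolaBisectors_meet_iff (hκ : κ ≠ 0) (huv : u ≠ v) (D : ℝ × ℝ) :
    (D.2 = parabolaBisector κ u v w D.1 ∧ D.2 = parabolaBisector κ v w u D.1) ↔
      D = (w, κ * (w ^ 2 + w * u - u * v + v * w) / 2) := by
  constructor
  · rintro ⟨hu, hv⟩
    have hx : D.1 = w := (parabolaBisector_eq_parabolaBisector_iff hκ huv).1 (hu.symm.trans hv)
    exact Prod.ext hx (by rw [hu, hx, parabolaBisector_third])
  · rintro rfl
    exact ⟨parabolaBisector_third.symm, parabolaBisector_third.symm.trans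
      ((parabolaBisector_eq_parabolaBisector_iff hκ huv).2 rfl)⟩

end

theorem bisectors_meet_at_midpoint_of_foot_general (κ a b c : ℝ)
    (hκ : κ ≠ 0) (hbc : b < c) :
    (∃! D : ℝ × ℝ,
        D.2 = κ * (b + (c + a) / 2) * D.1 - κ * b * (c + a) / 2 ∧
        D.2 = κ * (c + (a + b) / 2) * D.1 - κ * c * (a + b) / 2) ∧
    ∀ D : ℝ × ℝ,
      D.2 = κ * (b + (c + a) / 2) * D.1 - κ * b * (c + a) / 2 →
      D.2 = κ * (c + (a + b) / 2) * D.1 - κ * c * (a + b) / 2 →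
      D = ((a : ℝ), κ * (a ^ 2 + a * b - b * c + c * a) / 2) ∧
      D = (((a + a) / 2 : ℝ), (κ * a ^ 2 + κ * (a * b - b * c + c * a)) / 2) := by
  have meet := parabolaBisectors_meet_iff (w := a) hκ hbc.ne
  refine ⟨⟨_, (meet _).2 rfl, fun D hD => (meet D).1 hD⟩, fun D hb hc => ?_⟩
  rw [(meet D).1 ⟨hb, hc⟩]
  exact ⟨rfl, Prod.ext (by ring) (by ring)⟩

/-- Bisectors and midpoints of the feet: for `κ ≠ 0` and `a < b < c`, the bisectors
`ℓ_B` and `ℓ_C` of the positive DA angles at `B` and `C` of the triangle inscribed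
in `y = κ x²` meet in a unique point `D = (a, κ(a² + ab − bc + ca)/2)`, which is
the midpoint of `A = (a, κa²)` and the foot `A' = (a, κ(ab − bc + ca))` of the
vertical DA perpendicular from `A` to `BC`. -/
theorem bisectors_meet_at_midpoint_of_foot (κ a b c : ℝ)
    (hκ : κ ≠ 0) (hab : a < b) (hbc : b < c) :
    (∃! D : ℝ × ℝ,
        D.2 = κ * (b + (c + a) / 2) * D.1 - κ * b * (c + a) / 2 ∧
        D.2 = κ * (c + (a + b) / 2) * D.1 - κ * c * (a + b) / 2) ∧
    ∀ D : ℝ × ℝ,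
      D.2 = κ * (b + (c + a) / 2) * D.1 - κ * b * (c + a) / 2 →
      D.2 = κ * (c + (a + b) / 2) * D.1 - κ * c * (a + b) / 2 →
      D = ((a : ℝ), κ * (a ^ 2 + a * b - b * c + c * a) / 2) ∧
      D = (((a + a) / 2 : ℝ), (κ * a ^ 2 + κ * (a * b - b * c + c * a)) / 2) :=
  bisectors_meet_at_midpoint_of_foot_general κ a b c hκ hbc
end

section
/- Let a < b < c be real numbers with 2b ≠ a + c (the triangle is not DA isosceles). Consider the triangle with vertices A = (a,a²), B = (b,b²), C = (c,c²) on y = x², side lines AB : y = (a+b)x − ab, BC : y = (b+c)x − bc, CA : y = (c+a)x − ca, and the bisector lines ℓ_A : y = (a + (b+c)/2)x − a(b+c)/2, ℓ_B : y = (b + (c+a)/2)x − b(c+a)/2, ℓ_C : y = (c + (a+b)/2)x − c(a+b)/2. Let H_A = (a, (b+c)a − bc), H_B = (b, (c+a)b − ca), H_C = (c, (a+b)c − ab) be the feet of the vertical DA perpendiculars from A, B, C to the opposite sides. Then: (i) the lines BC and ℓ_A meet in a unique point L_A, which also lies on the line through H_B and H_C; (ii) CA and ℓ_B meet in a unique point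 L_B, which also lies on the line through H_C and H_A; (iii) AB and ℓ_C meet in a unique point L_C, which also lies on the line through H_A and H_B; and (iv) the three points L_A, L_B, L_C are collinear. -/
lemma collinear_triple (p q r : ℝ × ℝ)
    (h : (q.1 - p.1) * (r.2 - p.2) - (r.1 - p.1) * (q.2 - p.2) = 0) :
    Collinear ℝ ({p, q, r} : Set (ℝ × ℝ)) := by
  by_cases hq : q = p
  · subst hq
    have hs : ({q, q, r} : Set (ℝ × ℝ)) = {q, r} := by simp
    rw [hs]
    exact collinear_pair ℝ q r
  · apply (collinear_iff_of_mem (Set.mem_insert p _)).2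
    refine ⟨q - p, ?_⟩
    intro x hx
    rcases hx with rfl | rfl | rfl
    · exact ⟨0, by simp⟩
    · exact ⟨1, by simp⟩
    · by_cases h1 : q.1 = p.1
      · have h2 : q.2 ≠ p.2 := fun h2 => hq (Prod.ext h1 h2)
        have h2' : q.2 - p.2 ≠ 0 := sub_ne_zero.2 h2
        refine ⟨(x.2 - p.2) / (q.2 - p.2), ?_⟩
        have hr1 : x.1 = p.1 := by
          have hz : (x.1 - p.1) * (q.2 - p.2) = 0 := by rw [h1] at h; nlinarith [h]
          rcases mul_eq_zero.1 hz with h' | h'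
          · linarith
          · exact absurd (by linarith : q.2 = p.2) h2
        simp only [vadd_eq_add, Prod.ext_iff, Prod.fst_add, Prod.snd_add,
          Prod.smul_fst, Prod.smul_snd, Prod.fst_sub, Prod.snd_sub, smul_eq_mul]
        constructor
        · rw [h1, hr1]; ring
        · field_simp; ring
      · have h1' : q.1 - p.1 ≠ 0 := sub_ne_zero.2 h1
        refine ⟨(x.1 - p.1) / (q.1 - p.1), ?_⟩
        simp only [vadd_eq_add, Prod.ext_iff, Prod.fst_add, Prod.snd_add,
          Prod.smul_fst, Prod.smul_snd, Prod.fst_sub, Prod.snd_sub, smul_eq_mul]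
        constructor
        · field_simp; ring
        · rw [eq_comm, div_mul_eq_mul_div, div_add' _ _ _ h1', div_eq_iff h1']
          nlinarith [h]

lemma line_inter (m1 k1 m2 k2 : ℝ) (h : m1 ≠ m2) :
    ∃! L : ℝ × ℝ, L.2 = m1 * L.1 - k1 ∧ L.2 = m2 * L.1 - k2 := by
  have hd : m1 - m2 ≠ 0 := sub_ne_zero.2 h
  refine ⟨((k1 - k2) / (m1 - m2), m1 * ((k1 - k2) / (m1 - m2)) - k1), ⟨rfl, ?_⟩, ?_⟩
  · simp only
    field_simp
    ring
  · rintro ⟨x, y⟩ ⟨h1, h2⟩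
    simp only at h1 h2 ⊢
    have hx : x = (k1 - k2) / (m1 - m2) := by
      field_simp
      linarith
    refine Prod.ext hx ?_
    simp only
    rw [h1, hx]

/-- DA Bisector Collinearity Theorem: for `a < b < c` with `2b ≠ a + c`
(triangle not DA isosceles), each side line meets the corresponding DA bisector
in a unique point (`L_A = BC ∩ ℓ_A`, `L_B = CA ∩ ℓ_B`, `L_C = AB ∩ ℓ_C`);
`L_A` lies on the line `H_B H_C`, `L_B` on `H_C H_A`, `L_C` on `H_A H_B`
(`H_A, H_B, H_C` the feet of the vertical DA perpendiculars), and
`L_A, L_B, L_C` are collinear. -/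
theorem da_bisector_collinearity (a b c : ℝ) (hab : a < b) (hbc : b < c)
    (hiso : 2 * b ≠ a + c) :
    (∃! L : ℝ × ℝ,
        L.2 = (b + c) * L.1 - b * c ∧
        L.2 = (a + (b + c) / 2) * L.1 - a * (b + c) / 2) ∧
    (∃! L : ℝ × ℝ,
        L.2 = (c + a) * L.1 - c * a ∧
        L.2 = (b + (c + a) / 2) * L.1 - b * (c + a) / 2) ∧
    (∃! L : ℝ × ℝ,
        L.2 = (a + b) * L.1 - a * b ∧
        L.2 = (c + (a + b) / 2) * L.1 - c * (a + b) / 2) ∧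
    ∀ LA LB LC : ℝ × ℝ,
      (LA.2 = (b + c) * LA.1 - b * c ∧
        LA.2 = (a + (b + c) / 2) * LA.1 - a * (b + c) / 2) →
      (LB.2 = (c + a) * LB.1 - c * a ∧
        LB.2 = (b + (c + a) / 2) * LB.1 - b * (c + a) / 2) →
      (LC.2 = (a + b) * LC.1 - a * b ∧
        LC.2 = (c + (a + b) / 2) * LC.1 - c * (a + b) / 2) →
      Collinear ℝ ({(b, (c + a) * b - c * a), (c, (a + b) * c - a * b), LA} : Set (ℝ × ℝ)) ∧
      Collinear ℝ ({(c, (a + b) * c - a * b), (a, (b + c) * a - b * c), LB} : Set (ℝ × ℝ)) ∧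
      Collinear ℝ ({(a, (b + c) * a - b * c), (b, (c + a) * b - c * a), LC} : Set (ℝ × ℝ)) ∧
      Collinear ℝ ({LA, LB, LC} : Set (ℝ × ℝ)) := by
  have hd1 : b + c - 2 * a ≠ 0 := by linarith
  have hd2 : c + a - 2 * b ≠ 0 := fun h => hiso (by linarith)
  have hd3 : a + b - 2 * c ≠ 0 := by linarith
  refine ⟨?_, ?_, ?_, ?_⟩
  · have : (b + c : ℝ) ≠ (a + (b + c) / 2) := fun h => hd1 (by linarith)
    have := line_inter (b + c) (b * c) (a + (b + c) / 2) (a * (b + c) / 2) this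
    convert this using 4
  · have : (c + a : ℝ) ≠ (b + (c + a) / 2) := fun h => hd2 (by linarith)
    have := line_inter (c + a) (c * a) (b + (c + a) / 2) (b * (c + a) / 2) this
    convert this using 4
  · have : (a + b : ℝ) ≠ (c + (a + b) / 2) := fun h => hd3 (by linarith)
    have := line_inter (a + b) (a * b) (c + (a + b) / 2) (c * (a + b) / 2) this
    convert this using 4
  · rintro LA LB LC ⟨hA1, hA2⟩ ⟨hB1, hB2⟩ ⟨hC1, hC2⟩
    have hxA : LA.1 = (2 * b * c - a * (b + c)) / (b + c - 2 * a) := by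
      field_simp; linarith
    have hyA : LA.2 = (b + c) * ((2 * b * c - a * (b + c)) / (b + c - 2 * a)) - b * c := by
      rw [hA1, hxA]
    have hxB : LB.1 = (2 * c * a - b * (c + a)) / (c + a - 2 * b) := by
      field_simp; linarith
    have hyB : LB.2 = (c + a) * ((2 * c * a - b * (c + a)) / (c + a - 2 * b)) - c * a := by
      rw [hB1, hxB]
    have hxC : LC.1 = (2 * a * b - c * (a + b)) / (a + b - 2 * c) := by
      field_simp; linarith
    have hyC : LC.2 = (a + b) * ((2 * a * b - c * (a + b)) / (a + b - 2 * c)) - a * b := by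
      rw [hC1, hxC]
    refine ⟨?_, ?_, ?_, ?_⟩
    · apply collinear_triple
      simp only [hxA, hyA]
      field_simp
      ring
    · apply collinear_triple
      simp only [hxB, hyB]
      field_simp
      ring
    · apply collinear_triple
      simp only [hxC, hyC]
      field_simp
      ring
    · apply collinear_triple
      simp only [hxA, hyA, hxB, hyB, hxC, hyC]
      field_simp
      ring
end

section
/- Let A, B, C be three non-collinear points of the Euclidean plane, and set a = dist(B, C), b = dist(C, A), c = dist(A, B). Assume a ≠ c. Define J_A = (b/(b+c)) • B + (c/(b+c)) • C (the point where the internal bisector of the angle at A meets line BC), J_B = (a/(a−c)) • A − (c/(a−c)) • C (the point where the external bisector of the angle at B meets line CA), and J_C = (a/(a+b)) • A + (b/(a+b)) • B (the point where the internal bisector of the angle at C meets line AB). Then J_A, J_B, J_C are collinear. -/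
/-!
In barycentric coordinates the three points are `(0 : b : c)`, `(a : 0 : -c)` and `(a : b : 0)`,
whose determinant `-abc + abc` vanishes; explicitly, the second point is
`lineMap J_A J_C ((a + b) / (a - c))`. This is a purely affine identity; the metric only enters
through the triangle inequality, which keeps the denominators `b + c` and `a + b` nonzero when
`a ≠ c`.
-/

theorem collinear_menelaus_points {k V : Type*} [Field k] [AddCommGroup V] [Module k V]
    {a b c : k} (hbc : b + c ≠ 0) (hab : a + b ≠ 0) (hac : a ≠ c) (A B C : V) :
    Collinear k ({(b / (b + c)) • B + (c / (b + c)) • C,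
                  (a / (a - c)) • A - (c / (a - c)) • C,
                  (a / (a + b)) • A + (b / (a + b)) • B} : Set V) := by
  have hac' : a - c ≠ 0 := sub_ne_zero.2 hac
  have key : (a / (a - c)) • A - (c / (a - c)) • C =
      AffineMap.lineMap ((b / (b + c)) • B + (c / (b + c)) • C)
        ((a / (a + b)) • A + (b / (a + b)) • B) ((a + b) / (a - c)) := by
    rw [AffineMap.lineMap_apply_module]
    match_scalars <;> field_simp <;> ring
  rw [Set.insert_comm, key]
  exact collinear_insert_of_mem_affineSpan_pair (AffineMap.lineMap_mem_affineSpan_pair _ _ _)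

theorem angle_bisector_collinearity_general (A B C : EuclideanSpace ℝ (Fin 2))
    (a b c : ℝ) (ha : a = dist B C) (hb : b = dist C A) (hc : c = dist A B)
    (hac : a ≠ c) :
    Collinear ℝ ({(b / (b + c)) • B + (c / (b + c)) • C,
                  (a / (a - c)) • A - (c / (a - c)) • C,
                  (a / (a + b)) • A + (b / (a + b)) • B} :
        Set (EuclideanSpace ℝ (Fin 2))) := by
  subst ha hb hc
  have hbc : dist C A + dist A B ≠ 0 := fun h => hac <| by
    linarith [dist_triangle B A C, dist_comm A B, dist_comm A C, dist_nonneg (x := A) (y := B),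
      dist_nonneg (x := C) (y := A), dist_nonneg (x := B) (y := C)]
  have hab : dist B C + dist C A ≠ 0 := fun h => hac <| by
    linarith [dist_triangle A C B, dist_comm C B, dist_comm A C, dist_nonneg (x := A) (y := B),
      dist_nonneg (x := C) (y := A), dist_nonneg (x := B) (y := C)]
  exact collinear_menelaus_points hbc hab hac A B C

/-- Euclidean Angle-Bisector Collinearity Theorem: for a nondegenerate triangle
`A B C` with side lengths `a = |BC|`, `b = |CA|`, `c = |AB|` and `a ≠ c`, the
point `J_A` where the internal bisector at `A` meets `BC`, the point `J_B` where
the external bisector at `B` meets line `CA`, and the point `J_C` where the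
internal bisector at `C` meets `AB` are collinear. -/
theorem angle_bisector_collinearity (A B C : EuclideanSpace ℝ (Fin 2))
    (hnc : ¬ Collinear ℝ ({A, B, C} : Set (EuclideanSpace ℝ (Fin 2))))
    (a b c : ℝ) (ha : a = dist B C) (hb : b = dist C A) (hc : c = dist A B)
    (hac : a ≠ c) :
    Collinear ℝ ({(b / (b + c)) • B + (c / (b + c)) • C,
                  (a / (a - c)) • A - (c / (a - c)) • C,
                  (a / (a + b)) • A + (b / (a + b)) • B} :
        Set (EuclideanSpace ℝ (Fin 2))) :=
  angle_bisector_collinearity_general A B C a b c ha hb hc hac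
end

section
/- Let κ ≠ 0, t, s ∈ ℝ, and let a < b < c and c' < b' < a' be real numbers satisfying b − a = a' − b' and c − b = b' − c' (orientation-reversing difference-angle congruence of the two triangles). Put A = (a, κa²), B = (b, κb²), C = (c, κc²) on the parabola y = κx², and A' = (a', κ(a'−t)² + s), B' = (b', κ(b'−t)² + s), C' = (c', κ(c'−t)² + s) on the translated parabola y = κ(x−t)² + s. Let H_A be the unique point on the line B'C' with first coordinate a, H_B the unique point on the line C'A' with first coordinate b, and H_C the unique point on the line A'B' with first coordinate c (the feet of the vertical DA perpendiculars from A, B, C to B'C', C'A', A'B' respectively). Then H_A, H_B, H_C are collinear. -/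
lemma cross_of_collinear {P Q R : ℝ × ℝ}
    (h : Collinear ℝ ({P, Q, R} : Set (ℝ × ℝ))) :
    (Q.1 - P.1) * (R.2 - P.2) = (Q.2 - P.2) * (R.1 - P.1) := by
  obtain ⟨v, hv⟩ := (collinear_iff_of_mem (by simp : P ∈ ({P, Q, R} : Set (ℝ × ℝ)))).1 h
  obtain ⟨q, hq⟩ := hv Q (by simp)
  obtain ⟨r, hr⟩ := hv R (by simp)
  have hq1 : Q.1 = q * v.1 + P.1 := by rw [hq]; rfl
  have hq2 : Q.2 = q * v.2 + P.2 := by rw [hq]; rfl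
  have hr1 : R.1 = r * v.1 + P.1 := by rw [hr]; rfl
  have hr2 : R.2 = r * v.2 + P.2 := by rw [hr]; rfl
  rw [hq1, hq2, hr1, hr2]; ring

lemma collinear_of_cross {P Q R : ℝ × ℝ}
    (h : (Q.1 - P.1) * (R.2 - P.2) = (Q.2 - P.2) * (R.1 - P.1)) :
    Collinear ℝ ({P, Q, R} : Set (ℝ × ℝ)) := by
  by_cases hQP : Q = P
  · subst hQP
    have : ({Q, Q, R} : Set (ℝ × ℝ)) = {Q, R} := by
      simp [Set.insert_comm]
    rw [this]
    exact collinear_pair ℝ Q R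
  · apply (collinear_iff_of_mem (by simp : P ∈ ({P, Q, R} : Set (ℝ × ℝ)))).2
    refine ⟨Q - P, ?_⟩
    intro p hp
    simp only [Set.mem_insert_iff, Set.mem_singleton_iff] at hp
    rcases hp with rfl | rfl | rfl
    · exact ⟨0, by simp⟩
    · exact ⟨1, by simp⟩
    · by_cases h1 : Q.1 - P.1 ≠ 0
      · refine ⟨(p.1 - P.1) / (Q.1 - P.1), ?_⟩
        have e1 : (p.1 - P.1) / (Q.1 - P.1) * (Q.1 - P.1) + P.1 = p.1 := by
          field_simp
          ring
        have e2 : (p.1 - P.1) / (Q.1 - P.1) * (Q.2 - P.2) + P.2 = p.2 := by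
          field_simp
          linear_combination -h
        ext <;> simpa using by first | exact e1.symm | exact e2.symm
      · push_neg at h1
        have h2 : Q.2 - P.2 ≠ 0 := by
          intro h2
          apply hQP
          have := sub_eq_zero.1 h1
          have := sub_eq_zero.1 h2
          ext <;> assumption
        refine ⟨(p.2 - P.2) / (Q.2 - P.2), ?_⟩
        have e1' : (Q.2 - P.2) * (p.1 - P.1) = 0 := by rw [← h, h1]; ring
        have e1 : (p.2 - P.2) / (Q.2 - P.2) * (Q.1 - P.1) + P.1 = p.1 := by
          rcases mul_eq_zero.1 e1' with h' | h'
          · exact absurd h' h2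
          · rw [h1, sub_eq_zero.1 h']; ring
        have e2 : (p.2 - P.2) / (Q.2 - P.2) * (Q.2 - P.2) + P.2 = p.2 := by
          field_simp
          ring
        ext <;> simpa using by first | exact e1.symm | exact e2.symm



/-- Final theorem on orientation-reversing DA congruence: let `△ABC` be inscribed in
`y = κx²` (parameters `a < b < c`) and `△A'B'C'` in the translate `y = κ(x−t)² + s`
(parameters `c' < b' < a'`), with `b − a = a' − b'` and `c − b = b' − c'`
(orientation-reversing DA congruence). If `H_A, H_B, H_C` are the feet of the
vertical DA perpendiculars from `A, B, C` to the lines `B'C', C'A', A'B'`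
respectively (the points of those lines with first coordinates `a, b, c`),
then `H_A, H_B, H_C` are collinear. -/
theorem da_congruence_feet_collinear (κ t s : ℝ) (hκ : κ ≠ 0)
    (a b c a' b' c' : ℝ) (hab : a < b) (hbc : b < c)
    (hcb' : c' < b') (hba' : b' < a')
    (h1 : b - a = a' - b') (h2 : c - b = b' - c')
    (HA HB HC : ℝ × ℝ)
    (hHA1 : HA.1 = a)
    (hHA2 : Collinear ℝ ({(b', κ * (b' - t) ^ 2 + s), (c', κ * (c' - t) ^ 2 + s), HA} :
        Set (ℝ × ℝ)))
    (hHB1 : HB.1 = b)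
    (hHB2 : Collinear ℝ ({(c', κ * (c' - t) ^ 2 + s), (a', κ * (a' - t) ^ 2 + s), HB} :
        Set (ℝ × ℝ)))
    (hHC1 : HC.1 = c)
    (hHC2 : Collinear ℝ ({(a', κ * (a' - t) ^ 2 + s), (b', κ * (b' - t) ^ 2 + s), HC} :
        Set (ℝ × ℝ))) :
    Collinear ℝ ({HA, HB, HC} : Set (ℝ × ℝ)) := by

  have eA := cross_of_collinear hHA2
  have eB := cross_of_collinear hHB2
  have eC := cross_of_collinear hHC2
  simp only [hHA1, hHB1, hHC1] at eA eB eC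
  have hncb : c' - b' ≠ 0 := by intro h; linarith [sub_eq_zero.1 h]
  have hnac : a' - c' ≠ 0 := by intro h; linarith [sub_eq_zero.1 h]
  have hnba : b' - a' ≠ 0 := by intro h; linarith [sub_eq_zero.1 h]
  have yA : HA.2 = κ * (b' - t) ^ 2 + s + κ * (c' + b' - 2 * t) * (a - b') :=
    mul_left_cancel₀ hncb (by linear_combination eA)
  have yB : HB.2 = κ * (c' - t) ^ 2 + s + κ * (a' + c' - 2 * t) * (b - c') :=
    mul_left_cancel₀ hnac (by linear_combination eB)
  have yC : HC.2 = κ * (a' - t) ^ 2 + s + κ * (b' + a' - 2 * t) * (c - a') :=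
    mul_left_cancel₀ hnba (by linear_combination eC)
  apply collinear_of_cross
  rw [hHA1, hHB1, hHC1, yA, yB, yC]
  have ha' : a' = b - a + b' := by linarith
  have hc' : c' = b' - c + b := by linarith
  subst ha' hc'
  ring
end
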